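/- arXiv:2203.15372 — 2 statements merged into one kernel-verified Lean document; each statement's English description precedes it below -/
import Mathlib

section
/- Let X = {x_n}_{n≥1} be a Riesz sequence in a Hilbert space H and let V be an orthogonalizer of X, i.e., a bounded invertible linear operator on the closed linear span of X such that {Vx_n} is an orthonormal family. If V has the form U + K with U unitary and K compact, then lim_{n→∞} ‖x_n‖ = 1. -/
noncomputable section

open Complex Metric Set Filter Submodule Finset MeasureTheory
open scoped InnerProductSpace ENNReal Topology Classical

/-- The open unit disc in `ℂ`. -/
def uDisc : Set ℂ := Metric.ball 0 1

/-- The Hardy space `H²`, realized as the Hilbert space `ℓ²(ℕ)` of Taylor coefficients. -/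
abbrev H2 : Type := lp (fun _ : ℕ => ℂ) 2

/-- The analytic function on the unit disc associated with an element of `H²`. -/
def H2fun (f : H2) (z : ℂ) : ℂ := ∑' n : ℕ, f n * z ^ n

/-- Complex conjugation. -/
def conjC (z : ℂ) : ℂ := (starRingEnd ℂ) z

/-- The Möbius transform `τ_μ(z) = (z - μ)/(1 - conj μ · z)`. -/
def mobius (μ z : ℂ) : ℂ := (z - μ) / (1 - conjC μ * z)

/-- The Blaschke factor `b_λ = (-λ/|λ|)·τ_λ` (with `b_0(z) = z`). -/
def blaschkeFactor (l z : ℂ) : ℂ := if l = 0 then z else (-l / (‖l‖ : ℂ)) * mobius l z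

/-- The Blaschke product with zero set `Λ`. -/
def blaschkeProd (Λ : ℕ → ℂ) (z : ℂ) : ℂ := ∏' n, blaschkeFactor (Λ n) z

/-- A sequence of distinct points of the unit disc satisfying the Blaschke condition (B). -/
def BlaschkeSeq (Λ : ℕ → ℂ) : Prop :=
  (∀ n, Λ n ∈ uDisc) ∧ Function.Injective Λ ∧ Summable (fun n => 1 - ‖Λ n‖)

/-- A sequence of distinct points of the unit disc satisfying the Carleson condition (C):
`inf_n ∏_{m ≠ n} |τ_{λ_m}(λ_n)| > 0` (the infinite product being the infimum of its
finite partial products, all factors lying in `[0,1]`). -/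
def CarlesonSeq (Λ : ℕ → ℂ) : Prop :=
  (∀ n, Λ n ∈ uDisc) ∧ Function.Injective Λ ∧
    ∃ δ : ℝ, 0 < δ ∧ ∀ n : ℕ, ∀ F : Finset ℕ, δ ≤ ∏ m ∈ F.erase n, ‖mobius (Λ m) (Λ n)‖

/-- Membership in the closed unit ball `𝓑` of `H^∞`. -/
def MemBallHinf (h : ℂ → ℂ) : Prop :=
  DifferentiableOn ℂ h uDisc ∧ ∀ z ∈ uDisc, ‖h z‖ ≤ 1

/-- `θ` is an inner function: it is analytic and bounded by one on the unit disc, and its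
radial limits have modulus one at almost every point of the unit circle. -/
def InnerFunction (θ : ℂ → ℂ) : Prop :=
  DifferentiableOn ℂ θ uDisc ∧ (∀ z ∈ uDisc, ‖θ z‖ ≤ 1) ∧
    ∀ᵐ (t : ℝ) ∂(volume.restrict (Set.Ioc (0:ℝ) (2 * Real.pi))),
      Tendsto (fun r : ℝ => ‖θ ((r : ℂ) * Complex.exp ((t : ℂ) * Complex.I))‖)
        (nhdsWithin 1 (Set.Iio 1)) (nhds 1)

/-- `θ` is a finite Blaschke product. -/
def IsFiniteBlaschke (θ : ℂ → ℂ) : Prop :=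
  ∃ (c : ℂ) (N : ℕ) (a : Fin N → ℂ), ‖c‖ = 1 ∧ (∀ i, a i ∈ uDisc) ∧
    ∀ z ∈ uDisc, θ z = c * ∏ i, mobius (a i) z

/-- The Schur–Nevanlinna functions of `(Λ, θ)`:
`θ_0 = θ`, `θ_{n+1} = (τ_{γ_n} ∘ θ_n)/τ_{λ_n}` where `γ_n = θ_n(λ_n)`. -/
def SNfun (Λ : ℕ → ℂ) (θ : ℂ → ℂ) : ℕ → ℂ → ℂ
  | 0 => θ
  | n + 1 => fun z => mobius (SNfun Λ θ n (Λ n)) (SNfun Λ θ n z) / mobius (Λ n) z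

/-- The Schur–Nevanlinna coefficients `γ_n = θ_n(λ_n)` of `(Λ, θ)`. -/
def SNcoef (Λ : ℕ → ℂ) (θ : ℂ → ℂ) (n : ℕ) : ℂ := SNfun Λ θ n (Λ n)

/-- The subset `θ·H²` of `H²`. -/
def mulSet (θ : ℂ → ℂ) : Set H2 :=
  {g : H2 | ∃ f : H2, ∀ z ∈ uDisc, H2fun g z = θ z * H2fun f z}

/-- The model space `K_θ = H² ⊖ θH²`. -/
def modelSpace (θ : ℂ → ℂ) : Submodule ℂ H2 := (Submodule.span ℂ (mulSet θ))ᗮ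

instance modelSpace.hasOrthogonalProjection (θ : ℂ → ℂ) :
    HasOrthogonalProjection (modelSpace θ) :=
  haveI : CompleteSpace (modelSpace θ) :=
    (Submodule.isClosed_orthogonal (Submodule.span ℂ (mulSet θ))).completeSpace_coe
  HasOrthogonalProjection.ofCompleteSpace _

/-- The orthogonal projection `P_θ` of `H²` onto the model space `K_θ`,
viewed as a map into `H²`. -/
def Pproj (θ : ℂ → ℂ) (f : H2) : H2 := (orthogonalProjection (modelSpace θ) f : H2)

/-- The element of `H²` whose associated analytic function on the disc is `φ`
(zero if no such element exists; it is unique when it exists). -/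
def pickH2 (φ : ℂ → ℂ) : H2 :=
  if h : ∃ f : H2, ∀ z ∈ uDisc, H2fun f z = φ z then h.choose else 0

/-- The reproducing kernel `k_θ(λ,·) = (1 - conj(θ(λ))·θ(z))/(1 - conj λ · z)` of `K_θ`. -/
def repKernel (θ : ℂ → ℂ) (l : ℂ) : H2 :=
  pickH2 (fun z => (1 - conjC (θ l) * θ z) / (1 - conjC l * z))

/-- The normalized reproducing kernel `k̃_θ(λ,·) = k_θ(λ,·)/‖k_θ(λ,·)‖₂`. -/
def repKernelN (θ : ℂ → ℂ) (l : ℂ) : H2 := ‖repKernel θ l‖⁻¹ • repKernel θ l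

/-- The normalized Szegő kernel `k̃(λ,z) = √(1-|λ|²)/(1 - conj λ · z)`. -/
def szegoN (l : ℂ) : H2 :=
  pickH2 (fun z => (Real.sqrt (1 - ‖l‖ ^ 2) : ℂ) / (1 - conjC l * z))

/-- The Malmquist–Walsh functions `l_n = (∏_{i<n} b_{λ_i}) · k̃(λ_n,·)`. -/
def mwFun (Λ : ℕ → ℂ) (n : ℕ) : H2 :=
  pickH2 (fun z => (∏ i ∈ Finset.range n, blaschkeFactor (Λ i) z) *
    ((Real.sqrt (1 - ‖Λ n‖ ^ 2) : ℂ) / (1 - conjC (Λ n) * z)))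

/-- The function `l_μ(z) = (√(1-|μ|²)/(1 - conj μ · z))·B_Λ(z)`. -/
def lFun (Λ : ℕ → ℂ) (μ : ℂ) : H2 :=
  pickH2 (fun z => ((Real.sqrt (1 - ‖μ‖ ^ 2) : ℂ) / (1 - conjC μ * z)) * blaschkeProd Λ z)

/-- The closed linear hull of a set in `H²`. -/
def closedSpanSet (S : Set H2) : Set H2 := ((Submodule.span ℂ S).topologicalClosure : Set H2)

/-- A Riesz sequence: some bounded linear operator on the closed linear span, bounded below
(hence invertible onto its image), maps the family to an orthonormal family. -/
def IsRieszSeq {E : Type*} [NormedAddCommGroup E] [InnerProductSpace ℂ E] (x : ℕ → E) : Prop :=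
  ∃ V : ((Submodule.span ℂ (Set.range x)).topologicalClosure : Submodule ℂ E) →L[ℂ] E,
    (∃ c : ℝ, 0 < c ∧ ∀ y, c * ‖y‖ ≤ ‖V y‖) ∧
    Orthonormal ℂ (fun n => V ⟨x n,
      Submodule.le_topologicalClosure _ (Submodule.subset_span (Set.mem_range_self n))⟩)

/-- A Riesz basis in a (closed) subspace `K`: a Riesz sequence whose closed linear span is `K`. -/
def IsRieszBasisIn {E : Type*} [NormedAddCommGroup E] [InnerProductSpace ℂ E]
    (x : ℕ → E) (K : Submodule ℂ E) : Prop :=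
  IsRieszSeq x ∧ (Submodule.span ℂ (Set.range x)).topologicalClosure = K

/-- A minimal family: each member lies outside the closed linear span of the others. -/
def MinimalFam {E : Type*} [NormedAddCommGroup E] [InnerProductSpace ℂ E] (x : ℕ → E) : Prop :=
  ∀ n, x n ∉ (Submodule.span ℂ (x '' {k | k ≠ n})).topologicalClosure

/-- A uniformly minimal family. -/
def UnifMinimalFam {E : Type*} [NormedAddCommGroup E] [InnerProductSpace ℂ E]
    (x : ℕ → E) : Prop :=
  ∃ δ : ℝ, 0 < δ ∧ ∀ n, δ ≤
    Metric.infDist (‖x n‖⁻¹ • x n)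
      ((Submodule.span ℂ (x '' {k | k ≠ n})).topologicalClosure : Set E)

/-!
Put `y n = ⟨x n, hx n⟩ : S` and `e n = V (y n)`. An orthonormal sequence tends weakly to `0`
(Bessel's inequality), and a compact operator turns weakly null bounded sequences into norm
null ones; applied to `K ∘ W` this gives `K (y n) = (K ∘ W) (e n) → 0`. Since `U` is an isometry
and `‖e n‖ = 1`, `|‖x n‖ - 1| = |‖U (y n)‖ - ‖V (y n)‖| ≤ ‖K (y n)‖`.
-/

section

variable {𝕜 E F : Type*} [RCLike 𝕜] [NormedAddCommGroup E] [InnerProductSpace 𝕜 E]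
  [NormedAddCommGroup F] [InnerProductSpace 𝕜 F]

theorem Orthonormal.tendsto_inner_left_zero {e : ℕ → E} (he : Orthonormal 𝕜 e) (z : E) :
    Tendsto (fun n => ⟪e n, z⟫_𝕜) atTop (𝓝 0) := by
  rw [tendsto_zero_iff_norm_tendsto_zero]
  simpa [Real.sqrt_sq (norm_nonneg _)] using
    (he.inner_products_summable z).tendsto_atTop_zero.sqrt

theorem IsCompactOperator.tendsto_zero_of_tendsto_inner [CompleteSpace E] [CompleteSpace F]
    {T : E →L[𝕜] F} (hT : IsCompactOperator T) {u : ℕ → E}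
    (hu : Bornology.IsBounded (range u))
    (hweak : ∀ z, Tendsto (fun n => ⟪u n, z⟫_𝕜) atTop (𝓝 0)) :
    Tendsto (fun n => T (u n)) atTop (𝓝 0) := by
  obtain ⟨C, hC, hTC⟩ := hT.image_subset_compact_of_bounded (f := (T : E →ₗ[𝕜] F)) hu
  refine hC.tendsto_nhds_of_unique_mapClusterPt
    (Eventually.of_forall fun n => hTC (mem_image_of_mem _ (mem_range_self n))) fun a _ ha => ?_
  refine ext_inner_right 𝕜 fun z => ?_
  have hcluster : MapClusterPt ⟪a, z⟫_𝕜 atTop (fun n => ⟪T (u n), z⟫_𝕜) :=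
    ha.tendsto_comp (f := fun y => ⟪y, z⟫_𝕜) ((continuous_id.inner continuous_const).tendsto a)
  have hlim : Tendsto (fun n => ⟪T (u n), z⟫_𝕜) atTop (𝓝 0) := by
    simpa only [← ContinuousLinearMap.adjoint_inner_right] using
      hweak (ContinuousLinearMap.adjoint T z)
  simpa using eq_of_nhds_neBot (hcluster.neBot.mono (inf_le_inf_left _ hlim))

theorem IsCompactOperator.tendsto_zero_comp_orthonormal [CompleteSpace E] [CompleteSpace F]
    {T : E →L[𝕜] F} (hT : IsCompactOperator T) {e : ℕ → E} (he : Orthonormal 𝕜 e) :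
    Tendsto (fun n => T (e n)) atTop (𝓝 0) :=
  hT.tendsto_zero_of_tendsto_inner
    (isBounded_iff_forall_norm_le.2 ⟨1, by rintro _ ⟨n, rfl⟩; exact (he.1 n).le⟩)
    he.tendsto_inner_left_zero

end

theorem statement12_general {H : Type*} [NormedAddCommGroup H] [InnerProductSpace ℂ H]
    [CompleteSpace H] (x : ℕ → H) (S : Submodule ℂ H)
    (hS : S = (Submodule.span ℂ (Set.range x)).topologicalClosure)
    (hx : ∀ n, x n ∈ S)
    (V W U K : S →L[ℂ] S)
    (hWV : W.comp V = ContinuousLinearMap.id ℂ S)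
    (hON : Orthonormal ℂ (fun n => V ⟨x n, hx n⟩))
    (hU : Isometry U)
    (hK : IsCompactOperator K) (hV : V = U + K) :
    Tendsto (fun n => ‖x n‖) atTop (𝓝 1) := by
  have : CompleteSpace S := hS ▸ (isClosed_topologicalClosure _).completeSpace_coe
  have hKx : Tendsto (fun n => K ⟨x n, hx n⟩) atTop (𝓝 0) := by
    have hKW := (hK.comp_clm W).tendsto_zero_comp_orthonormal (T := K.comp W) hON
    simpa only [ContinuousLinearMap.coe_comp, Function.comp_apply,
      ← ContinuousLinearMap.comp_apply, hWV, ContinuousLinearMap.id_apply] using hKW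
  have hbound : ∀ n, ‖‖x n‖ - 1‖ ≤ ‖K ⟨x n, hx n⟩‖ := fun n => by
    calc ‖‖x n‖ - 1‖ = |‖U ⟨x n, hx n⟩‖ - ‖V ⟨x n, hx n⟩‖| := by
          rw [hU.norm_map_of_map_zero (map_zero U), hON.1 n, Real.norm_eq_abs]; rfl
      _ ≤ ‖V ⟨x n, hx n⟩ - U ⟨x n, hx n⟩‖ :=
          (abs_norm_sub_norm_le _ _).trans_eq (norm_sub_rev _ _)
      _ = ‖K ⟨x n, hx n⟩‖ := by rw [hV, add_apply, add_sub_cancel_left]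
  simpa using (squeeze_zero_norm hbound (tendsto_zero_iff_norm_tendsto_zero.1 hKx)).add_const 1

/-- If a Riesz sequence admits an orthogonalizer of the form
unitary + compact, then `‖x_n‖ → 1`. -/
theorem statement12 {H : Type*} [NormedAddCommGroup H] [InnerProductSpace ℂ H]
    [CompleteSpace H] (x : ℕ → H) (S : Submodule ℂ H)
    (hS : S = (Submodule.span ℂ (Set.range x)).topologicalClosure)
    (hx : ∀ n, x n ∈ S)
    (V W U K : S →L[ℂ] S)
    (hWV : W.comp V = ContinuousLinearMap.id ℂ S)
    (hVW : V.comp W = ContinuousLinearMap.id ℂ S)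
    (hON : Orthonormal ℂ (fun n => V ⟨x n, hx n⟩))
    (hU : Isometry U) (hUsurj : Function.Surjective U)
    (hK : IsCompactOperator K) (hV : V = U + K) :
    Tendsto (fun n => ‖x n‖) atTop (𝓝 1) :=
  statement12_general x S hS hx V W U K hWV hON hU hK hV
end
end

section
/- Let X = {x_n}_{n≥1} be a Riesz sequence in a Hilbert space H admitting an orthogonalizer of the form U + K with U unitary and K compact. Then lim_{n→∞} dist(x_n, span{x_k : k ≠ n}) = 1. -/
noncomputable section

open Complex Metric Set Filter Submodule Finset MeasureTheory
open scoped InnerProductSpace ENNReal Topology Classical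

/-!
Put `e n = V (x n)`. An orthonormal sequence tends weakly to `0`, hence so do `x n = W (e n)` and
`K† (e n)`, and the compact operator `K` maps weakly null bounded sequences to norm-null ones:
so `K (x n) → 0` and, as `‖K† (e n)‖ ^ 2 ≤ ‖K (K† (e n))‖`, also `K† (e n) → 0`.
Thus `‖x n‖ = ‖U (x n)‖ = ‖e n - K (x n)‖ → 1`, and the biorthogonal vectors
`x' n = V† (e n) = U† (e n) + K† (e n)` satisfy `‖x' n‖ → 1` as well, `U†` being unitary.
Since `x' n` is orthogonal to every `x k` with `k ≠ n` and `⟪x' n, x n⟫ = 1`, the distance from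
`x n` to the closed span of the others lies between `‖x' n‖⁻¹` and `‖x n‖`.
-/

section InnerProductSpace

variable {𝕜 E ι : Type*} [RCLike 𝕜] [NormedAddCommGroup E] [InnerProductSpace 𝕜 E]

theorem Orthonormal.tendsto_inner_zero {e : ι → E} (he : Orthonormal 𝕜 e) (w : E) :
    Tendsto (fun i => ⟪e i, w⟫_𝕜) cofinite (𝓝 0) := by
  have hsq := (he.inner_products_summable w).tendsto_cofinite_zero.sqrt
  simp only [Real.sqrt_sq (norm_nonneg _), Real.sqrt_zero] at hsq
  exact tendsto_zero_iff_norm_tendsto_zero.2 hsq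

theorem Orthonormal.isBounded_range {e : ι → E} (he : Orthonormal 𝕜 e) :
    Bornology.IsBounded (range e) :=
  (isBounded_sphere (x := 0) (r := 1)).subset
    (range_subset_iff.2 fun i => mem_sphere_zero_iff_norm.2 (he.norm_eq_one i))

theorem tendsto_norm_of_norm_eq_one_of_tendsto_sub {l : Filter ι} {a b : ι → E}
    (ha : ∀ i, ‖a i‖ = 1) (hab : Tendsto (fun i => b i - a i) l (𝓝 0)) :
    Tendsto (fun i => ‖b i‖) l (𝓝 1) := by
  rw [tendsto_iff_dist_tendsto_zero]
  refine squeeze_zero (fun _ => dist_nonneg) (fun i => ?_)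
    (tendsto_zero_iff_norm_tendsto_zero.1 hab)
  rw [Real.dist_eq, ← ha i]
  exact abs_norm_sub_norm_le _ _

theorem Submodule.mem_orthogonal_span_iff {s : Set E} {p : E} :
    p ∈ (span 𝕜 s)ᗮ ↔ ∀ u ∈ s, ⟪p, u⟫_𝕜 = 0 := by
  refine ⟨fun hp u hu => inner_left_of_mem_orthogonal (subset_span hu) hp, fun h => ?_⟩
  refine (mem_orthogonal' _ _).2 fun u hu => mem_orthogonal_singleton_iff_inner_right.1 ?_
  exact span_le.2 (fun u hu => mem_orthogonal_singleton_iff_inner_right.2 (h u hu)) hu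

theorem inv_norm_le_infDist_of_mem_orthogonal {M : Submodule 𝕜 E} {p v : E} (hp : p ∈ Mᗮ)
    (hpv : ⟪p, v⟫_𝕜 = 1) : ‖p‖⁻¹ ≤ infDist v M := by
  have hp0 : 0 < ‖p‖ := norm_pos_iff.2 (by rintro rfl; simp at hpv)
  refine (le_infDist ⟨0, M.zero_mem⟩).2 fun y hy => (inv_le_iff_one_le_mul₀' hp0).2 ?_
  calc (1 : ℝ) = ‖⟪p, v - y⟫_𝕜‖ := by
        rw [inner_sub_right, inner_left_of_mem_orthogonal hy hp, hpv, sub_zero, norm_one]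
    _ ≤ ‖p‖ * dist v y := by rw [dist_eq_norm]; exact norm_inner_le_norm _ _

end InnerProductSpace

section CompactOperator
open ContinuousLinearMap

variable {𝕜 E F ι : Type*} [RCLike 𝕜] [NormedAddCommGroup E] [InnerProductSpace 𝕜 E]
  [NormedAddCommGroup F] [InnerProductSpace 𝕜 F] [CompleteSpace E] [CompleteSpace F]
  {l : Filter ι} {y : ι → E}

theorem ContinuousLinearMap.tendsto_inner_apply_zero (A : E →L[𝕜] F)
    (hy : ∀ w, Tendsto (fun i => ⟪y i, w⟫_𝕜) l (𝓝 0)) (w : F) :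
    Tendsto (fun i => ⟪A (y i), w⟫_𝕜) l (𝓝 0) := by
  simpa only [adjoint_inner_right] using hy (adjoint A w)

theorem IsCompactOperator.tendsto_apply_zero {T : E →L[𝕜] F} (hT : IsCompactOperator T)
    (hb : Bornology.IsBounded (range y)) (hy : ∀ w, Tendsto (fun i => ⟪y i, w⟫_𝕜) l (𝓝 0)) :
    Tendsto (fun i => T (y i)) l (𝓝 0) := by
  -- `T ∘ y` stays in a compact set, and a cluster point `z` satisfies `⟪z, w⟫ = 0` for every `w`.
  refine (hT.isCompact_closure_image_of_bounded hb).tendsto_nhds_of_unique_mapClusterPt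
    (Eventually.of_forall fun i => subset_closure (mem_image_of_mem T (mem_range_self i)))
    fun z _ hz => ext_inner_right 𝕜 fun w => ?_
  have hcl : MapClusterPt ⟪z, w⟫_𝕜 l (fun i => ⟪T (y i), w⟫_𝕜) :=
    hz.continuousAt_comp (f := fun u => ⟪u, w⟫_𝕜) (by fun_prop)
  rw [inner_zero_left]
  exact eq_of_nhds_neBot (ClusterPt.mono hcl (T.tendsto_inner_apply_zero hy w))

theorem IsCompactOperator.tendsto_adjoint_apply_zero {T : F →L[𝕜] E} (hT : IsCompactOperator T)
    (hb : Bornology.IsBounded (range y)) (hy : ∀ w, Tendsto (fun i => ⟪y i, w⟫_𝕜) l (𝓝 0)) :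
    Tendsto (fun i => adjoint T (y i)) l (𝓝 0) := by
  set z := fun i => adjoint T (y i)
  obtain ⟨C, hC⟩ := hb.exists_norm_le
  have hTz : Tendsto (fun i => T (z i)) l (𝓝 0) := by
    refine hT.tendsto_apply_zero ?_ ((adjoint T).tendsto_inner_apply_zero hy)
    have := (adjoint T).lipschitz.isBounded_image hb
    rwa [← range_comp] at this
  have hsq : ∀ i, ‖z i‖ ^ 2 ≤ C * ‖T (z i)‖ := fun i => calc
    ‖z i‖ ^ 2 = RCLike.re ⟪z i, z i⟫_𝕜 := (inner_self_eq_norm_sq (𝕜 := 𝕜) _).symm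
    _ ≤ ‖⟪y i, T (z i)⟫_𝕜‖ := by rw [adjoint_inner_left]; exact RCLike.re_le_norm _
    _ ≤ ‖y i‖ * ‖T (z i)‖ := norm_inner_le_norm _ _
    _ ≤ C * ‖T (z i)‖ := by gcongr; exact hC _ (mem_range_self i)
  have hz : Tendsto (fun i => ‖z i‖ ^ 2) l (𝓝 0) := by
    refine squeeze_zero (fun _ => by positivity) hsq ?_
    simpa using (tendsto_zero_iff_norm_tendsto_zero.1 hTz).const_mul C
  refine tendsto_zero_iff_norm_tendsto_zero.2 ?_
  simpa only [Real.sqrt_sq (norm_nonneg _), Real.sqrt_zero] using hz.sqrt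

end CompactOperator

section UnitaryPlusCompact
open ContinuousLinearMap

variable {𝕜 E ι : Type*} [RCLike 𝕜] [NormedAddCommGroup E] [InnerProductSpace 𝕜 E]
  [CompleteSpace E] {e : ι → E} {U K : E →L[𝕜] E}

theorem tendsto_norm_apply_of_orthonormal (he : Orthonormal 𝕜 e) (hU : Isometry U)
    (hK : IsCompactOperator K) {W : E →L[𝕜] E} (hW : ∀ i, (U + K) (W (e i)) = e i) :
    Tendsto (fun i => ‖W (e i)‖) cofinite (𝓝 1) := by
  have hWe : Tendsto (fun i => K (W (e i))) cofinite (𝓝 0) := by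
    refine hK.tendsto_apply_zero ?_ (W.tendsto_inner_apply_zero he.tendsto_inner_zero)
    have := W.lipschitz.isBounded_image he.isBounded_range
    rwa [← range_comp] at this
  have hUWe : Tendsto (fun i => ‖U (W (e i))‖) cofinite (𝓝 1) := by
    refine tendsto_norm_of_norm_eq_one_of_tendsto_sub he.norm_eq_one ?_
    have hsub : ∀ i, U (W (e i)) - e i = -K (W (e i)) := fun i =>
      eq_neg_of_add_eq_zero_left (by rw [sub_add_eq_add_sub, ← add_apply, hW, sub_self])
    simpa only [hsub, neg_zero] using hWe.neg
  simpa only [(AddMonoidHomClass.isometry_iff_norm U).1 hU] using hUWe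

theorem tendsto_norm_adjoint_apply_of_orthonormal (he : Orthonormal 𝕜 e) (hU : Isometry U)
    (hUsurj : Function.Surjective U) (hK : IsCompactOperator K) :
    Tendsto (fun i => ‖adjoint (U + K) (e i)‖) cofinite (𝓝 1) := by
  let U' : E ≃ₗᵢ[𝕜] E :=
    .ofSurjective ⟨U, (AddMonoidHomClass.isometry_iff_norm U).1 hU⟩ hUsurj
  have hUadj : adjoint U = U'.symm := U'.adjoint_eq_symm
  refine tendsto_norm_of_norm_eq_one_of_tendsto_sub (a := fun i => adjoint U (e i))
    (fun i => by simp [hUadj, he.norm_eq_one]) ?_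
  simpa only [map_add, add_apply, add_sub_cancel_left] using
    hK.tendsto_adjoint_apply_zero he.isBounded_range he.tendsto_inner_zero

end UnitaryPlusCompact

open ContinuousLinearMap in
theorem statement13_general {H : Type*} [NormedAddCommGroup H] [InnerProductSpace ℂ H]
    [CompleteSpace H] (x : ℕ → H) (S : Submodule ℂ H)
    (hS : S = (Submodule.span ℂ (Set.range x)).topologicalClosure)
    (hx : ∀ n, x n ∈ S)
    (V W U K : S →L[ℂ] S)
    (hWV : W.comp V = ContinuousLinearMap.id ℂ S)
    (hON : Orthonormal ℂ (fun n => V ⟨x n, hx n⟩))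
    (hU : Isometry U) (hUsurj : Function.Surjective U)
    (hK : IsCompactOperator K) (hV : V = U + K) :
    Tendsto (fun n => Metric.infDist (x n)
      ((Submodule.span ℂ (x '' {k | k ≠ n})).topologicalClosure : Set H)) atTop (𝓝 1) := by
  have : CompleteSpace S :=
    (hS ▸ isClosed_topologicalClosure _ : IsClosed (S : Set H)).completeSpace_coe
  subst hV
  set y : ℕ → S := fun n => ⟨x n, hx n⟩
  set e : ℕ → S := fun n => (U + K) (y n)
  have hWe (n : ℕ) : W (e n) = y n := congr($hWV (y n))
  have hxy (n : ℕ) : x n = (y n : H) := rfl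
  have hperp (n : ℕ) :
      (adjoint (U + K) (e n) : H) ∈ (span ℂ (x '' {k | k ≠ n})).topologicalClosureᗮ := by
    rw [orthogonal_closure, mem_orthogonal_span_iff]
    rintro _ ⟨k, hk, rfl⟩
    rw [hxy, ← coe_inner, adjoint_inner_left, orthonormal_iff_ite.1 hON, if_neg (Ne.symm hk)]
  have hdual (n : ℕ) : ⟪(adjoint (U + K) (e n) : H), x n⟫_ℂ = 1 := by
    rw [hxy, ← coe_inner, adjoint_inner_left,
      inner_self_eq_one_of_norm_eq_one (hON.norm_eq_one n)]
  rw [← Nat.cofinite_eq_atTop]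
  refine tendsto_of_tendsto_of_tendsto_of_le_of_le (g := fun n => ‖adjoint (U + K) (e n)‖⁻¹)
    (h := fun n => ‖W (e n)‖) ?_
    (tendsto_norm_apply_of_orthonormal hON hU hK fun n => by rw [hWe])
    (fun n => inv_norm_le_infDist_of_mem_orthogonal (hperp n) (hdual n))
    (fun n => (infDist_le_dist_of_mem (zero_mem _)).trans_eq <| by
      beta_reduce; rw [dist_zero_right, hWe]; rfl)
  simpa using (tendsto_norm_adjoint_apply_of_orthonormal hON hU hUsurj hK).inv₀ one_ne_zero

/-- If a Riesz sequence admits an orthogonalizer of the form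
unitary + compact, then `dist(x_n, span{x_k : k ≠ n}) → 1`. -/
theorem statement13 {H : Type*} [NormedAddCommGroup H] [InnerProductSpace ℂ H]
    [CompleteSpace H] (x : ℕ → H) (S : Submodule ℂ H)
    (hS : S = (Submodule.span ℂ (Set.range x)).topologicalClosure)
    (hx : ∀ n, x n ∈ S)
    (V W U K : S →L[ℂ] S)
    (hWV : W.comp V = ContinuousLinearMap.id ℂ S)
    (hVW : V.comp W = ContinuousLinearMap.id ℂ S)
    (hON : Orthonormal ℂ (fun n => V ⟨x n, hx n⟩))
    (hU : Isometry U) (hUsurj : Function.Surjective U)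
    (hK : IsCompactOperator K) (hV : V = U + K) :
    Tendsto (fun n => Metric.infDist (x n)
      ((Submodule.span ℂ (x '' {k | k ≠ n})).topologicalClosure : Set H)) atTop (𝓝 1) :=
  statement13_general x S hS hx V W U K hWV hON hU hUsurj hK hV
end
end
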